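/- arXiv:2502.00968 — 3 statements merged into one kernel-verified Lean document; each statement's English description precedes it below -/
import Mathlib

section
/- Let p be a probability measure on a measurable space X, let r : X → ℝ be measurable with atomless pushforward of p under r, and let F be the CDF of this pushforward. For N ≥ 1, define the Best-of-N measure π_N = p.withDensity(x ↦ N·(F(r(x)))^(N−1)), i.e. the measure with density N·F(r(·))^(N−1) with respect to p. Then π_N is a probability measure (the density integrates to 1 against p), and its Kullback–Leibler divergence from p is exactly KL(π_N‖p) = log N − (N−1)/N. -/
open MeasureTheory

/-- Kullback–Leibler divergence `KL(π‖p) = ∫ log(dπ/dp) dπ` (real-valued version,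
meaningful for `π ≪ p` with integrable log-likelihood ratio). -/
noncomputable def KL {X : Type*} [MeasurableSpace X] (π p : Measure X) : ℝ :=
  ∫ x, llr π p x ∂π

section Aux

open Set Filter Topology ProbabilityTheory
open scoped ENNReal NNReal

private lemma cdf_cont (μ : Measure ℝ) [IsProbabilityMeasure μ] [NullSingletonClass μ] :
    Continuous fun t => cdf μ t := by
  rw [continuous_iff_continuousAt]
  intro x
  have hmono : Monotone fun t => cdf μ t := monotone_cdf μ
  rw [hmono.continuousAt_iff_leftLim_eq_rightLim]
  have hright : Function.rightLim (fun t => cdf μ t) x = cdf μ x := by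
    refine tendsto_nhds_unique (hmono.tendsto_rightLim x) ?_
    exact ((cdf μ).right_continuous x).tendsto.mono_left
      (nhdsWithin_mono x Ioi_subset_Ici_self)
  have h0 : (cdf μ).measure {x} = 0 := by rw [measure_cdf]; exact measure_singleton x
  rw [StieltjesFunction.measure_singleton, ENNReal.ofReal_eq_zero] at h0
  have h2 : Function.leftLim (fun t => cdf μ t) x ≤ cdf μ x := hmono.leftLim_le le_rfl
  have hleft : Function.leftLim (fun t => cdf μ t) x = cdf μ x := by
    have : Function.leftLim (⇑(cdf μ)) x = Function.leftLim (fun t => cdf μ t) x := rfl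
    rw [this] at h0
    linarith
  rw [hleft, hright]

private lemma map_cdf (μ : Measure ℝ) [IsProbabilityMeasure μ] [NullSingletonClass μ] :
    μ.map (fun t => cdf μ t) = volume.restrict (Icc (0:ℝ) 1) := by
  have hmono : Monotone fun t => cdf μ t := monotone_cdf μ
  have hcont := cdf_cont μ
  have hmeas : Measurable fun t => cdf μ t := hcont.measurable
  haveI : IsProbabilityMeasure (μ.map (fun t => cdf μ t)) :=
    Measure.isProbabilityMeasure_map hmeas.aemeasurable
  refine Measure.ext_of_Iic _ _ fun u => ?_
  rw [Measure.map_apply hmeas measurableSet_Iic,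
    Measure.restrict_apply measurableSet_Iic]
  rcases lt_or_ge u 0 with hu | hu
  · have h1 : (fun t => cdf μ t) ⁻¹' Iic u = ∅ := by
      ext t; simp only [mem_preimage, mem_Iic, mem_empty_iff_false, iff_false, not_le]
      exact lt_of_lt_of_le hu (cdf_nonneg μ t)
    have h2 : Iic u ∩ Icc (0:ℝ) 1 = ∅ := by
      ext t; simp only [mem_inter_iff, mem_Iic, mem_Icc, mem_empty_iff_false, iff_false]
      rintro ⟨h3, h4, -⟩; linarith
    rw [h1, h2]
    simp
  rcases le_or_gt 1 u with hu1 | hu1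
  · have h1 : (fun t => cdf μ t) ⁻¹' Iic u = univ := by
      ext t; simp only [mem_preimage, mem_Iic, mem_univ, iff_true]
      exact le_trans (cdf_le_one μ t) hu1
    have h2 : Iic u ∩ Icc (0:ℝ) 1 = Icc 0 1 := by
      refine inter_eq_self_of_subset_right fun t ht => ?_
      exact le_trans ht.2 hu1
    rw [h1, h2, measure_univ, Real.volume_Icc]
    norm_num
  · -- 0 ≤ u < 1
    have h2 : Iic u ∩ Icc (0:ℝ) 1 = Icc 0 u := by
      ext t; simp only [mem_inter_iff, mem_Iic, mem_Icc]
      constructor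
      · rintro ⟨h3, h4, -⟩; exact ⟨h4, h3⟩
      · rintro ⟨h3, h4⟩; exact ⟨h4, h3, le_trans h4 hu1.le⟩
    rw [h2, Real.volume_Icc]
    have hA : (fun t => cdf μ t) ⁻¹' Iic u = {t | cdf μ t ≤ u} := rfl
    -- bounded above
    obtain ⟨t0, ht0⟩ : ∃ t0, u < cdf μ t0 := by
      exact ((tendsto_cdf_atTop μ).eventually (eventually_gt_nhds hu1)).exists
    have hBdd : BddAbove {t | cdf μ t ≤ u} := by
      refine ⟨t0, fun t ht => ?_⟩
      by_contra h
      push_neg at h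
      exact absurd (hmono h.le) (by simp only [not_le]; exact lt_of_le_of_lt ht ht0)
    by_cases hne : {t | cdf μ t ≤ u}.Nonempty
    · set a := sSup {t | cdf μ t ≤ u} with ha_def
      have hclosed : IsClosed {t | cdf μ t ≤ u} := isClosed_le hcont continuous_const
      have ha : a ∈ {t | cdf μ t ≤ u} := hclosed.csSup_mem hne hBdd
      have hFa : cdf μ a = u := by
        refine le_antisymm ha ?_
        by_contra h
        push_neg at h
        have hev : ∀ᶠ t in 𝓝 a, cdf μ t < u :=
          (hcont.continuousAt (x := a)).eventually_lt_const h
        obtain ⟨t, ht, hta⟩ :=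
          ((hev.filter_mono (nhdsWithin_le_nhds (s := Ioi a))).and
            eventually_mem_nhdsWithin).exists
        have : t ≤ a := le_csSup hBdd ht.le
        exact absurd hta (by simpa using this)
      have hEq : {t | cdf μ t ≤ u} = Iic a := by
        refine Subset.antisymm (fun t ht => le_csSup hBdd ht) (fun t ht => ?_)
        exact le_trans (hmono ht) (le_of_eq hFa)
      rw [hA, hEq, ← ofReal_cdf, hFa, sub_zero]
    · rw [not_nonempty_iff_eq_empty] at hne
      have hu0 : u = 0 := by
        by_contra h
        have hupos : 0 < u := lt_of_le_of_ne hu (Ne.symm h)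
        obtain ⟨t, ht⟩ : ∃ t, cdf μ t < u := by
          exact ((tendsto_cdf_atBot μ).eventually (eventually_lt_nhds hupos)).exists
        exact absurd (mem_empty_iff_false t).mp (by rw [← hne] at *; exact fun h2 => h2 ht.le)
      rw [hA, hne, hu0, measure_empty]
      norm_num

private lemma integral_pow_succ_mul_log (n : ℕ) :
    ∫ x in (0:ℝ)..1, x ^ (n+1) * Real.log x = -(1 / ((n:ℝ)+2)^2) := by
  have hc : ((n:ℝ)+2) ≠ 0 := by positivity
  set G : ℝ → ℝ := fun x => x ^ (n+2) * Real.log x / ((n:ℝ)+2) - x ^ (n+2) / ((n:ℝ)+2)^2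
    with hG
  have hkey : Continuous fun x : ℝ => x ^ (n+2) * Real.log x := by
    have h : (fun x : ℝ => x ^ (n+2) * Real.log x) = fun x => x ^ (n+1) * (x * Real.log x) := by
      funext x; ring
    rw [h]; exact (continuous_pow _).mul Real.continuous_mul_log
  have hcontG : ContinuousOn G (Icc 0 1) :=
    ((hkey.div_const _).sub ((continuous_pow _).div_const _)).continuousOn
  have hderiv : ∀ x ∈ Ioo (0:ℝ) 1, HasDerivAt G (x ^ (n+1) * Real.log x) x := by
    intro x hx
    have hx0 : x ≠ 0 := ne_of_gt hx.1
    have h1 : HasDerivAt (fun y : ℝ => y ^ (n+2) * Real.log y)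
        ((((n:ℝ)+2) * x ^ (n+1)) * Real.log x + x ^ (n+2) * x⁻¹) x := by
      have := (hasDerivAt_pow (n+2) x).mul (Real.hasDerivAt_log hx0)
      refine this.congr_deriv ?_
      push_cast
      ring_nf
    have h2 := (h1.div_const ((n:ℝ)+2)).sub ((hasDerivAt_pow (n+2) x).div_const (((n:ℝ)+2)^2))
    refine h2.congr_deriv ?_
    have hpow : x ^ (n+2) * x⁻¹ = x ^ (n+1) := by
      rw [pow_succ]
      field_simp
    rw [hpow]
    push_cast
    field_simp
    ring
  have hint : IntervalIntegrable (fun x => x ^ (n+1) * Real.log x) volume 0 1 := by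
    have h : (fun x : ℝ => x ^ (n+1) * Real.log x) = fun x => x ^ n * (x * Real.log x) := by
      funext x; ring
    rw [h]
    exact ((continuous_pow _).mul Real.continuous_mul_log).intervalIntegrable _ _
  rw [intervalIntegral.integral_eq_sub_of_hasDerivAt_of_le zero_le_one hcontG hderiv hint]
  simp [hG]

/-- The Best-of-N measure `π_N = p.withDensity (x ↦ N·(F(r(x)))^(N−1))`, where `F` is the
CDF of the atomless reward distribution `p.map r`, is a probability measure, and its KL
divergence from `p` equals `log N − (N−1)/N`. -/
theorem bestOfN_isProbability_and_kl
    {X : Type*} [MeasurableSpace X] (p : Measure X) [IsProbabilityMeasure p]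
    (r : X → ℝ) (hr : Measurable r) [NullSingletonClass (p.map r)] (N : ℕ) (hN : 1 ≤ N) :
    IsProbabilityMeasure
        (p.withDensity fun x =>
          ENNReal.ofReal (N * (ProbabilityTheory.cdf (p.map r) (r x)) ^ (N - 1))) ∧
      KL (p.withDensity fun x =>
            ENNReal.ofReal (N * (ProbabilityTheory.cdf (p.map r) (r x)) ^ (N - 1))) p =
        Real.log N - ((N : ℝ) - 1) / N := by
  rcases eq_or_lt_of_le hN with hN1 | hN2
  · -- N = 1
    subst hN1
    have hd : (fun x : X =>
        ENNReal.ofReal ((1:ℕ) * (cdf (p.map r) (r x)) ^ (1 - 1))) = 1 := by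
      funext x; simp
    rw [hd, withDensity_one]
    refine ⟨inferInstance, ?_⟩
    have h0 : llr p p =ᵐ[p] fun _ => (0:ℝ) := by
      filter_upwards [Measure.rnDeriv_self p] with x hx
      simp [llr, hx]
    rw [KL, integral_congr_ae h0]
    simp
  · -- N ≥ 2
    obtain ⟨m, rfl⟩ : ∃ m, N = m + 2 := ⟨N - 2, by omega⟩
    set μ : Measure ℝ := p.map r with hμ
    haveI : IsProbabilityMeasure μ := Measure.isProbabilityMeasure_map hr.aemeasurable
    set F : ℝ → ℝ := fun t => cdf μ t with hF
    have hFmeas : Measurable F := (cdf_cont μ).measurable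
    set c : ℝ := ((m + 2 : ℕ) : ℝ) with hc
    have hc0 : (0:ℝ) < c := by positivity
    set g : ℝ → ℝ := fun u => c * u ^ (m+1) with hg
    have hg_cont : Continuous g := continuous_const.mul (continuous_pow _)
    set d : X → ℝ := fun x => (m + 2 : ℕ) * (cdf (p.map r) (r x)) ^ (m + 2 - 1) with hd
    have hd_eq : ∀ x, d x = g (F (r x)) := fun x => rfl
    have hd_nonneg : ∀ x, 0 ≤ d x := by
      intro x
      rw [hd_eq]
      exact mul_nonneg hc0.le (pow_nonneg (cdf_nonneg μ _) _)
    have hd_meas : Measurable d := (hg_cont.measurable.comp hFmeas).comp hr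
    -- transfer lemma for lintegrals
    have hmap2 : μ.map F = volume.restrict (Icc (0:ℝ) 1) := map_cdf μ
    -- interval integral values
    have hIg : ∫ u in (0:ℝ)..1, g u = 1 := by
      rw [hg]
      rw [intervalIntegral.integral_const_mul, integral_pow]
      rw [hc]
      push_cast
      field_simp
      ring
    have hint_g : IntervalIntegrable g volume 0 1 := hg_cont.intervalIntegrable _ _
    -- step 1: the density integrates to 1
    have hkey1 : ∫⁻ x, ENNReal.ofReal (d x) ∂p = 1 := by
      have e1 : ∫⁻ x, ENNReal.ofReal (d x) ∂p
          = ∫⁻ u, ENNReal.ofReal (g u) ∂(μ.map F) := by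
        rw [lintegral_map (hg_cont.measurable.ennreal_ofReal) hFmeas,
          lintegral_map
            (show Measurable fun t => ENNReal.ofReal (g (F t)) from
              (hg_cont.measurable.comp hFmeas).ennreal_ofReal) hr]
        rfl
      rw [e1, hmap2]
      have hInt : IntegrableOn g (Icc (0:ℝ) 1) volume := hg_cont.integrableOn_Icc
      rw [← ofReal_integral_eq_lintegral_ofReal hInt ?_]
      · have : ∫ u in Icc (0:ℝ) 1, g u = ∫ u in (0:ℝ)..1, g u := by
          rw [integral_Icc_eq_integral_Ioc, intervalIntegral.integral_of_le zero_le_one]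
        rw [this, hIg, ENNReal.ofReal_one]
      · filter_upwards [ae_restrict_mem measurableSet_Icc] with u hu
        exact mul_nonneg hc0.le (pow_nonneg hu.1 _)
    have hprob : IsProbabilityMeasure (p.withDensity fun x => ENNReal.ofReal (d x)) := by
      constructor
      rw [withDensity_apply _ MeasurableSet.univ, setLIntegral_univ, hkey1]
    refine ⟨hprob, ?_⟩
    -- step 2: KL computation
    set π : Measure X := p.withDensity fun x => ENNReal.ofReal (d x) with hπ
    have hrn : π.rnDeriv p =ᵐ[p] fun x => ENNReal.ofReal (d x) :=
      Measure.rnDeriv_withDensity p hd_meas.ennreal_ofReal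
    have hllr_p : llr π p =ᵐ[p] fun x => Real.log (d x) := by
      filter_upwards [hrn] with x hx
      rw [llr, hx, ENNReal.toReal_ofReal (hd_nonneg x)]
    have hllr : llr π p =ᵐ[π] fun x => Real.log (d x) :=
      hllr_p.filter_mono (withDensity_absolutelyContinuous p _).ae_le
    rw [KL, integral_congr_ae hllr]
    have hsmul : ∫ x, Real.log (d x) ∂π = ∫ x, d x * Real.log (d x) ∂p := by
      have : π = p.withDensity fun x => ((d x).toNNReal : ℝ≥0∞) := rfl
      rw [this, integral_withDensity_eq_integral_smul hd_meas.real_toNNReal]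
      refine integral_congr_ae (Eventually.of_forall fun x => ?_)
      show (d x).toNNReal • Real.log (d x) = d x * Real.log (d x)
      rw [NNReal.smul_def, Real.coe_toNNReal _ (hd_nonneg x), smul_eq_mul]
    rw [hsmul]
    set φ : ℝ → ℝ := fun u => g u * Real.log (g u) with hφ
    have hφ_meas : Measurable φ :=
      hg_cont.measurable.mul (Real.measurable_log.comp hg_cont.measurable)
    have e2 : ∫ x, d x * Real.log (d x) ∂p = ∫ u, φ u ∂(μ.map F) := by
      rw [integral_map hFmeas.aemeasurable hφ_meas.aestronglyMeasurable,
        integral_map hr.aemeasurable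
          (show AEStronglyMeasurable (fun t => φ (F t)) (p.map r) from
            (hφ_meas.comp hFmeas).aestronglyMeasurable)]
      rfl
    rw [e2, hmap2]
    have e3 : ∫ u in Icc (0:ℝ) 1, φ u = ∫ u in (0:ℝ)..1, φ u := by
      rw [integral_Icc_eq_integral_Ioc, intervalIntegral.integral_of_le zero_le_one]
    rw [e3]
    -- decompose φ on [0,1]
    set ψ : ℝ → ℝ := fun u => Real.log c * g u + (c * ((m:ℝ)+1)) * (u^(m+1) * Real.log u)
      with hψ
    have hEq : ∀ u ∈ uIcc (0:ℝ) 1, φ u = ψ u := by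
      intro u hu
      rw [uIcc_of_le zero_le_one] at hu
      rcases eq_or_lt_of_le hu.1 with h0 | h0
      · simp [hφ, hψ, hg, ← h0]
      · have hup : (0:ℝ) < u ^ (m+1) := pow_pos h0 _
        rw [hφ, hψ, hg]
        simp only
        rw [Real.log_mul (ne_of_gt hc0) (ne_of_gt hup), Real.log_pow]
        push_cast
        ring
    rw [intervalIntegral.integral_congr hEq]
    have hint1 : IntervalIntegrable (fun u => Real.log c * g u) volume 0 1 :=
      (continuous_const.mul hg_cont).intervalIntegrable _ _
    have hint2 : IntervalIntegrable
        (fun u : ℝ => (c * ((m:ℝ)+1)) * (u^(m+1) * Real.log u)) volume 0 1 := by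
      have h : (fun u : ℝ => u ^ (m+1) * Real.log u)
          = fun u => u ^ m * (u * Real.log u) := by
        funext u; ring
      refine IntervalIntegrable.const_mul ?_ _
      rw [h]
      exact ((continuous_pow _).mul Real.continuous_mul_log).intervalIntegrable _ _
    have hA : ∫ u in (0:ℝ)..1, Real.log c * g u = Real.log c := by
      rw [intervalIntegral.integral_const_mul, hIg, mul_one]
    have hB : ∫ u in (0:ℝ)..1, (c * ((m:ℝ)+1)) * (u^(m+1) * Real.log u)
        = (c * ((m:ℝ)+1)) * -(1 / ((m:ℝ)+2)^2) := by
      rw [intervalIntegral.integral_const_mul, integral_pow_succ_mul_log m]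
    rw [hψ, intervalIntegral.integral_add hint1 hint2, hA, hB]
    have hc' : c = (m:ℝ)+2 := by rw [hc]; push_cast; ring
    rw [hc']
    field_simp
    ring

end Aux
end

section
/- Let n ≥ 1 and let X₀, X₁, …, X_n be standard Borel spaces. Let κ_i and η_i (for i = 1,…,n) be Markov kernels from X_{i−1} to X_i, and let μ₀ be a probability measure on X₀ serving as the common initial distribution. Let μ_i (resp. ν_i) denote the marginal law at step i of the chain started at μ₀ and evolved with κ₁,…,κ_i (resp. η₁,…,η_i). If there is a constant c ≥ 0 such that for each i and each x in X_{i−1}, KL(κ_i(x)‖η_i(x)) ≤ c, then the laws of the final states satisfy KL(μ_n‖ν_n) ≤ n·c. In particular, with c = log N − (N−1)/N (the per-block KL bound for Best-of-N selection with N candidates) and n = T/B blocks, this yields the bound KL(CoDe(N,B)‖Base) ≤ (log N − (N−1)/N)·(T/B) of Lemma 1. -/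
open MeasureTheory ProbabilityTheory

open Classical in
/-- Extended-real-valued Kullback–Leibler divergence: `KL(π‖p) = ∫ log(dπ/dp) dπ` when
`π ≪ p` and the log-likelihood ratio is `π`-integrable, and `⊤` (infinity) otherwise. -/
noncomputable def KLe {X : Type*} [MeasurableSpace X] (π p : Measure X) : EReal :=
  if π ≪ p ∧ Integrable (llr π p) π then ((∫ x, llr π p x ∂π : ℝ) : EReal) else ⊤

section Auxiliary

open Real
open scoped ENNReal NNReal

set_option linter.unusedSectionVars false

section Aux

variable {α : Type*} {mα : MeasurableSpace α}

lemma real_mul_negpart_log_le {t : ℝ} (ht : 0 ≤ t) : t * max (-Real.log t) 0 ≤ Real.exp (-1) := by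
  rcases eq_or_lt_of_le ht with h | h
  · simp [← h, (Real.exp_pos (-1)).le]
  · rw [mul_max_of_nonneg _ _ h.le, mul_zero]
    refine max_le ?_ (Real.exp_pos _).le
    have h1 : -Real.log t = Real.log (Real.exp (-1) / t) + 1 := by
      rw [Real.log_div (Real.exp_ne_zero _) h.ne', Real.log_exp]; ring
    have h2 : Real.log (Real.exp (-1) / t) ≤ Real.exp (-1) / t - 1 :=
      Real.log_le_sub_one_of_pos (by positivity)
    calc t * -Real.log t ≤ t * (Real.exp (-1) / t) := by
          rw [h1]; exact mul_le_mul_of_nonneg_left (by linarith) h.le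
      _ = Real.exp (-1) := by field_simp

lemma lintegral_negpart_llr_le (μ ν : Measure α) [IsProbabilityMeasure μ] [IsProbabilityMeasure ν]
    (hμν : μ ≪ ν) :
    ∫⁻ x, ENNReal.ofReal (max (-llr μ ν x) 0) ∂μ ≤ ENNReal.ofReal (Real.exp (-1)) := by
  have hmeas : Measurable fun x ↦ ENNReal.ofReal (max (-llr μ ν x) 0) :=
    ((measurable_llr μ ν).neg.max measurable_const).ennreal_ofReal
  rw [← lintegral_rnDeriv_mul hμν hmeas.aemeasurable]
  have hb : ∀ᵐ x ∂ν, μ.rnDeriv ν x * ENNReal.ofReal (max (-llr μ ν x) 0)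
      ≤ ENNReal.ofReal (Real.exp (-1)) := by
    filter_upwards [Measure.rnDeriv_lt_top μ ν] with x hx
    rw [llr_def]
    nth_rewrite 1 [← ENNReal.ofReal_toReal hx.ne]
    rw [← ENNReal.ofReal_mul ENNReal.toReal_nonneg]
    exact ENNReal.ofReal_le_ofReal (real_mul_negpart_log_le ENNReal.toReal_nonneg)
  calc ∫⁻ x, μ.rnDeriv ν x * ENNReal.ofReal (max (-llr μ ν x) 0) ∂ν
      ≤ ∫⁻ _, ENNReal.ofReal (Real.exp (-1)) ∂ν := lintegral_mono_ae hb
    _ = ENNReal.ofReal (Real.exp (-1)) := by simp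

lemma integrable_negpart_llr (μ ν : Measure α) [IsProbabilityMeasure μ] [IsProbabilityMeasure ν]
    (hμν : μ ≪ ν) : Integrable (fun x ↦ max (-llr μ ν x) 0) μ := by
  refine ⟨((measurable_llr μ ν).neg.max measurable_const).aestronglyMeasurable, ?_⟩
  refine (hasFiniteIntegral_iff_ofReal (ae_of_all _ fun x ↦ le_max_right _ _)).mpr ?_
  exact lt_of_le_of_lt (lintegral_negpart_llr_le μ ν hμν) ENNReal.ofReal_lt_top

lemma integral_negpart_llr_le (μ ν : Measure α) [IsProbabilityMeasure μ] [IsProbabilityMeasure ν]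
    (hμν : μ ≪ ν) : ∫ x, max (-llr μ ν x) 0 ∂μ ≤ Real.exp (-1) := by
  rw [integral_eq_lintegral_of_nonneg_ae (ae_of_all _ fun x ↦ le_max_right (-llr μ ν x) 0)
    ((measurable_llr μ ν).neg.max measurable_const).aestronglyMeasurable]
  calc (∫⁻ x, ENNReal.ofReal (max (-llr μ ν x) 0) ∂μ).toReal
      ≤ (ENNReal.ofReal (Real.exp (-1))).toReal :=
        ENNReal.toReal_mono ENNReal.ofReal_ne_top (lintegral_negpart_llr_le μ ν hμν)
    _ = Real.exp (-1) := ENNReal.toReal_ofReal (Real.exp_pos _).le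

lemma integral_abs_llr_le (μ ν : Measure α) [IsProbabilityMeasure μ] [IsProbabilityMeasure ν]
    (hμν : μ ≪ ν) (hint : Integrable (llr μ ν) μ) {c : ℝ}
    (hc : ∫ x, llr μ ν x ∂μ ≤ c) : ∫ x, |llr μ ν x| ∂μ ≤ c + 2 * Real.exp (-1) := by
  have hid : ∀ x, |llr μ ν x| = llr μ ν x + 2 * max (-llr μ ν x) 0 := by
    intro x; rcases le_or_gt 0 (llr μ ν x) with h | h
    · rw [abs_of_nonneg h, max_eq_right (by linarith)]; ring
    · rw [abs_of_neg h, max_eq_left (by linarith)]; ring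
  have h2 : Integrable (fun x ↦ 2 * max (-llr μ ν x) 0) μ :=
    (integrable_negpart_llr μ ν hμν).const_mul 2
  calc ∫ x, |llr μ ν x| ∂μ = ∫ x, (llr μ ν x + 2 * max (-llr μ ν x) 0) ∂μ :=
        integral_congr_ae (ae_of_all _ hid)
    _ = ∫ x, llr μ ν x ∂μ + 2 * ∫ x, max (-llr μ ν x) 0 ∂μ := by
        rw [integral_add hint h2, integral_const_mul]
    _ ≤ c + 2 * Real.exp (-1) := by
        have := integral_negpart_llr_le μ ν hμν; linarith

lemma integral_llr_nonneg (μ ν : Measure α) [IsProbabilityMeasure μ] [IsProbabilityMeasure ν]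
    (hμν : μ ≪ ν) (hint : Integrable (llr μ ν) μ) : 0 ≤ ∫ x, llr μ ν x ∂μ := by
  have hφm : Measurable fun x ↦ ((μ.rnDeriv ν x).toReal)⁻¹ :=
    (Measure.measurable_rnDeriv μ ν).ennreal_toReal.inv
  have hφ0 : ∀ x, (0:ℝ) ≤ ((μ.rnDeriv ν x).toReal)⁻¹ := fun x ↦ by positivity
  have hlin : ∫⁻ x, ENNReal.ofReal (((μ.rnDeriv ν x).toReal)⁻¹) ∂μ ≤ 1 := by
    rw [← lintegral_rnDeriv_mul hμν hφm.ennreal_ofReal.aemeasurable]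
    have hb : ∀ᵐ x ∂ν, μ.rnDeriv ν x * ENNReal.ofReal (((μ.rnDeriv ν x).toReal)⁻¹) ≤ 1 := by
      filter_upwards [Measure.rnDeriv_lt_top μ ν] with x hx
      rcases eq_or_ne (μ.rnDeriv ν x) 0 with h0 | h0
      · simp [h0]
      · have htp : 0 < (μ.rnDeriv ν x).toReal := ENNReal.toReal_pos h0 hx.ne
        nth_rewrite 1 [← ENNReal.ofReal_toReal hx.ne]
        rw [← ENNReal.ofReal_mul ENNReal.toReal_nonneg, mul_inv_cancel₀ htp.ne']
        simp
    calc ∫⁻ x, μ.rnDeriv ν x * ENNReal.ofReal (((μ.rnDeriv ν x).toReal)⁻¹) ∂ν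
        ≤ ∫⁻ _, 1 ∂ν := lintegral_mono_ae hb
      _ = 1 := by simp
  have hφint : Integrable (fun x ↦ ((μ.rnDeriv ν x).toReal)⁻¹) μ := by
    refine ⟨hφm.aestronglyMeasurable, ?_⟩
    refine (hasFiniteIntegral_iff_ofReal (ae_of_all _ hφ0)).mpr ?_
    exact lt_of_le_of_lt hlin ENNReal.one_lt_top
  have hφval : ∫ x, ((μ.rnDeriv ν x).toReal)⁻¹ ∂μ ≤ 1 := by
    rw [integral_eq_lintegral_of_nonneg_ae (ae_of_all _ hφ0) hφm.aestronglyMeasurable]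
    calc (∫⁻ x, ENNReal.ofReal (((μ.rnDeriv ν x).toReal)⁻¹) ∂μ).toReal ≤ (1 : ℝ≥0∞).toReal :=
          ENNReal.toReal_mono ENNReal.one_ne_top hlin
      _ = 1 := by simp
  have hptw : ∀ᵐ x ∂μ, -llr μ ν x ≤ ((μ.rnDeriv ν x).toReal)⁻¹ - 1 := by
    filter_upwards [Measure.rnDeriv_pos hμν, hμν.ae_le (Measure.rnDeriv_lt_top μ ν)] with x h0 hx
    have htp : 0 < (μ.rnDeriv ν x).toReal := ENNReal.toReal_pos h0.ne' hx.ne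
    rw [llr_def]
    have hlog := Real.log_le_sub_one_of_pos (inv_pos.mpr htp)
    rw [Real.log_inv] at hlog
    linarith
  have hmono := integral_mono_ae hint.neg (hφint.sub (integrable_const 1)) hptw
  simp only [Pi.neg_apply, Pi.sub_apply] at hmono
  rw [integral_neg, integral_sub hφint (integrable_const 1), integral_const] at hmono
  simp only [measure_univ, probReal_univ, ENNReal.toReal_one, smul_eq_mul, one_mul] at hmono
  linarith

end Aux

section CompProd

variable {α β : Type*} {mα : MeasurableSpace α} {mβ : MeasurableSpace β}
  [MeasurableSpace.CountablyGenerated β]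

lemma snd_compProd_eq_bind (μ : Measure α) [SFinite μ] (κ : Kernel α β) [IsSFiniteKernel κ] :
    (μ ⊗ₘ κ).snd = μ.bind κ := by
  ext s hs
  rw [Measure.snd_apply hs, Measure.compProd_apply (measurable_snd hs),
    Measure.bind_apply hs (Kernel.measurable κ).aemeasurable]
  rfl

lemma ae_fst_compProd (μ : Measure α) [IsProbabilityMeasure μ] (κ : Kernel α β) [IsMarkovKernel κ]
    {E : Set α} (hE : MeasurableSet E) (h : ∀ᵐ x ∂μ, x ∈ E) :
    ∀ᵐ p ∂(μ ⊗ₘ κ), p.1 ∈ E := by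
  rw [ae_iff] at h ⊢
  have hrw : {p : α × β | ¬ p.1 ∈ E} = Prod.fst ⁻¹' {x | ¬ x ∈ E} := rfl
  have hE' : MeasurableSet {x | ¬ x ∈ E} := hE.compl
  rw [hrw, ← Measure.fst_apply hE', Measure.fst_compProd]
  exact h

lemma compProd_eq_withDensity
    (μ ν : Measure α) [IsProbabilityMeasure μ] [IsProbabilityMeasure ν]
    (κ η : Kernel α β) [IsMarkovKernel κ] [IsMarkovKernel η]
    (hμν : μ ≪ ν) (hκη : ∀ᵐ x ∂μ, κ x ≪ η x) :
    μ ⊗ₘ κ = (ν ⊗ₘ η).withDensity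
      (fun p ↦ μ.rnDeriv ν p.1 * Kernel.rnDeriv κ η p.1 p.2) := by
  have hρm : Measurable (fun p : α × β ↦ μ.rnDeriv ν p.1 * Kernel.rnDeriv κ η p.1 p.2) :=
    ((Measure.measurable_rnDeriv μ ν).comp measurable_fst).mul (Kernel.measurable_rnDeriv κ η)
  ext s hs
  rw [withDensity_apply _ hs, Measure.compProd_apply hs, ← lintegral_indicator hs,
    Measure.lintegral_compProd (hρm.indicator hs)]
  have hind : ∀ x y, s.indicator (fun p : α × β ↦ μ.rnDeriv ν p.1 * Kernel.rnDeriv κ η p.1 p.2) (x, y)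
      = (Prod.mk x ⁻¹' s).indicator
        (fun y ↦ μ.rnDeriv ν x * Kernel.rnDeriv κ η x y) y := by
    intro x y
    by_cases h : (x, y) ∈ s <;> simp [Set.indicator, h]
  have hinner : ∀ x, ∫⁻ y, s.indicator
        (fun p : α × β ↦ μ.rnDeriv ν p.1 * Kernel.rnDeriv κ η p.1 p.2) (x, y) ∂η x
      = μ.rnDeriv ν x * ∫⁻ y in Prod.mk x ⁻¹' s, Kernel.rnDeriv κ η x y ∂η x := by
    intro x
    simp_rw [hind]
    rw [lintegral_indicator (measurable_prodMk_left hs)]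
    exact lintegral_const_mul _ (Kernel.measurable_rnDeriv_right κ η x)
  simp_rw [hinner]
  have hκslice : Measurable fun x ↦ κ x (Prod.mk x ⁻¹' s) :=
    Kernel.measurable_kernel_prodMk_left hs
  rw [show ∫⁻ x, κ x (Prod.mk x ⁻¹' s) ∂μ
      = ∫⁻ x, μ.rnDeriv ν x * κ x (Prod.mk x ⁻¹' s) ∂ν from
    (lintegral_rnDeriv_mul hμν hκslice.aemeasurable).symm]
  refine lintegral_congr_ae ?_
  have hae : ∀ᵐ x ∂μ, ∫⁻ y in Prod.mk x ⁻¹' s, Kernel.rnDeriv κ η x y ∂η x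
      = κ x (Prod.mk x ⁻¹' s) := by
    filter_upwards [hκη] with x hx
    rw [lintegral_congr_ae (ae_restrict_of_ae (Kernel.rnDeriv_eq_rnDeriv_measure)),
      Measure.setLIntegral_rnDeriv hx]
  have hae' : ∀ᵐ x ∂ν, μ.rnDeriv ν x ≠ 0 →
      ∫⁻ y in Prod.mk x ⁻¹' s, Kernel.rnDeriv κ η x y ∂η x = κ x (Prod.mk x ⁻¹' s) := by
    rw [← ae_withDensity_iff (Measure.measurable_rnDeriv μ ν)]
    rw [Measure.withDensity_rnDeriv_eq μ ν hμν]
    exact hae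
  filter_upwards [hae'] with x hx
  rcases eq_or_ne (μ.rnDeriv ν x) 0 with h0 | h0
  · simp [h0]
  · rw [hx h0]

lemma rnDeriv_compProd_ae
    (μ ν : Measure α) [IsProbabilityMeasure μ] [IsProbabilityMeasure ν]
    (κ η : Kernel α β) [IsMarkovKernel κ] [IsMarkovKernel η]
    (hμν : μ ≪ ν) (hκη : ∀ᵐ x ∂μ, κ x ≪ η x) :
    (μ ⊗ₘ κ).rnDeriv (ν ⊗ₘ η) =ᵐ[ν ⊗ₘ η]
      fun p ↦ μ.rnDeriv ν p.1 * Kernel.rnDeriv κ η p.1 p.2 := by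
  have hρm : Measurable (fun p : α × β ↦ μ.rnDeriv ν p.1 * Kernel.rnDeriv κ η p.1 p.2) :=
    ((Measure.measurable_rnDeriv μ ν).comp measurable_fst).mul (Kernel.measurable_rnDeriv κ η)
  rw [compProd_eq_withDensity μ ν κ η hμν hκη]
  exact Measure.rnDeriv_withDensity _ hρm

lemma llr_compProd
    (μ ν : Measure α) [IsProbabilityMeasure μ] [IsProbabilityMeasure ν]
    (κ η : Kernel α β) [IsMarkovKernel κ] [IsMarkovKernel η]
    (hμν : μ ≪ ν) (hκη : ∀ᵐ x ∂μ, κ x ≪ η x) :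
    llr (μ ⊗ₘ κ) (ν ⊗ₘ η) =ᵐ[μ ⊗ₘ κ]
      fun p ↦ llr μ ν p.1 + Real.log (Kernel.rnDeriv κ η p.1 p.2).toReal := by
  have hPQ : μ ⊗ₘ κ ≪ ν ⊗ₘ η := hμν.compProd hκη
  have h1 := hPQ.ae_le (rnDeriv_compProd_ae μ ν κ η hμν hκη)
  have h2 : ∀ᵐ p ∂(μ ⊗ₘ κ), p.1 ∈ μ.rnDeriv ν ⁻¹' (Set.Ioo 0 ⊤) := by
    refine ae_fst_compProd μ κ ((Measure.measurable_rnDeriv μ ν) measurableSet_Ioo) ?_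
    filter_upwards [Measure.rnDeriv_pos hμν, hμν.ae_le (Measure.rnDeriv_lt_top μ ν)] with x h h'
    exact Set.mem_Ioo.mpr ⟨h, h'⟩
  have h3 : ∀ᵐ p ∂(μ ⊗ₘ κ), Kernel.rnDeriv κ η p.1 p.2 ∈ Set.Ioo 0 ⊤ := by
    rw [Measure.ae_compProd_iff ((Kernel.measurable_rnDeriv κ η) measurableSet_Ioo)]
    filter_upwards [hκη] with x hx
    filter_upwards [Kernel.rnDeriv_pos hx, hx.ae_le (Kernel.rnDeriv_lt_top κ η)] with y hy hy'
    exact Set.mem_Ioo.mpr ⟨hy, hy'⟩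
  filter_upwards [h1, h2, h3] with p hp hf hg
  simp only [Set.mem_preimage, Set.mem_Ioo] at hf hg
  simp only [llr_def, hp, ENNReal.toReal_mul]
  rw [Real.log_mul (ENNReal.toReal_pos hf.1.ne' hf.2.ne).ne'
    (ENNReal.toReal_pos hg.1.ne' hg.2.ne).ne']

end CompProd

section Marginal

variable {α β : Type*} {mα : MeasurableSpace α} {mβ : MeasurableSpace β}
  [StandardBorelSpace α] [Nonempty α]

lemma kl_snd_le (P Q : Measure (α × β)) [IsProbabilityMeasure P] [IsProbabilityMeasure Q]
    (hPQ : P ≪ Q) (hint : Integrable (llr P Q) P) :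
    P.snd ≪ Q.snd ∧ Integrable (llr P.snd Q.snd) P.snd ∧
      ∫ y, llr P.snd Q.snd y ∂P.snd ≤ ∫ p, llr P Q p ∂P := by
  set e : α × β ≃ᵐ β × α := MeasurableEquiv.prodComm with he
  set P' : Measure (β × α) := P.map e with hP'
  set Q' : Measure (β × α) := Q.map e with hQ'
  haveI : IsProbabilityMeasure P' := Measure.isProbabilityMeasure_map e.measurable.aemeasurable
  haveI : IsProbabilityMeasure Q' := Measure.isProbabilityMeasure_map e.measurable.aemeasurable
  have hfstP : P'.fst = P.snd := by
    rw [hP', Measure.fst, Measure.map_map measurable_fst e.measurable]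
    rfl
  have hfstQ : Q'.fst = Q.snd := by
    rw [hQ', Measure.fst, Measure.map_map measurable_fst e.measurable]
    rfl
  have hP'Q' : P' ≪ Q' := hPQ.map e.measurable
  -- transfer of llr along e
  have hllr_e : (fun p ↦ llr P' Q' (e p)) =ᵐ[P] llr P Q := by
    have h := e.measurableEmbedding.rnDeriv_map P Q
    filter_upwards [hPQ.ae_le h] with p hp
    simp only [llr_def, hP', hQ', hp]
  have hint' : Integrable (llr P' Q') P' := by
    rw [hP', integrable_map_equiv e]
    exact hint.congr hllr_e.symm
  have hval' : ∫ p, llr P' Q' p ∂P' = ∫ p, llr P Q p ∂P := by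
    rw [hP', integral_map_equiv e]
    exact integral_congr_ae hllr_e
  -- disintegration
  have hdisP : P'.fst ⊗ₘ P'.condKernel = P' := P'.disintegrate P'.condKernel
  have hdisQ : Q'.fst ⊗ₘ Q'.condKernel = Q' := Q'.disintegrate Q'.condKernel
  have hmw : P'.fst ≪ Q'.fst := hP'Q'.map measurable_fst
  -- a.e. absolute continuity of conditional kernels
  have hcondAC : ∀ᵐ y ∂P'.fst, P'.condKernel y ≪ Q'.condKernel y := by
    have hS : MeasurableSet (Kernel.mutuallySingularSet P'.condKernel Q'.condKernel) :=
      Kernel.measurableSet_mutuallySingularSet _ _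
    have hQ'S0 : (Q'.fst ⊗ₘ Q'.condKernel) (Kernel.mutuallySingularSet P'.condKernel Q'.condKernel) = 0 := by
      rw [Measure.compProd_apply hS]
      have hz : ∀ y, Q'.condKernel y
          (Prod.mk y ⁻¹' Kernel.mutuallySingularSet P'.condKernel Q'.condKernel) = 0 := by
        intro y
        exact Kernel.measure_mutuallySingularSetSlice P'.condKernel Q'.condKernel y
      simp_rw [hz]
      simp
    have hQ'S : Q' (Kernel.mutuallySingularSet P'.condKernel Q'.condKernel) = 0 := by
      rw [hdisQ] at hQ'S0; exact hQ'S0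
    have hP'S : P' (Kernel.mutuallySingularSet P'.condKernel Q'.condKernel) = 0 := hP'Q' hQ'S
    have hP'S0 : (P'.fst ⊗ₘ P'.condKernel) (Kernel.mutuallySingularSet P'.condKernel Q'.condKernel) = 0 := by
      rw [hdisP]; exact hP'S
    rw [Measure.compProd_apply hS] at hP'S0
    have hz := (lintegral_eq_zero_iff (Kernel.measurable_kernel_prodMk_left hS)).mp hP'S0
    filter_upwards [hz] with y hy
    rw [← Kernel.singularPart_eq_zero_iff_absolutelyContinuous,
      Kernel.singularPart_eq_zero_iff_measure_eq_zero]
    exact hy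
  -- llr decomposition on P'
  have hdec := llr_compProd P'.fst Q'.fst P'.condKernel Q'.condKernel hmw hcondAC
  rw [hdisP, hdisQ] at hdec
  set F : β × α → ℝ :=
    fun p ↦ llr P'.fst Q'.fst p.1 + Real.log (Kernel.rnDeriv P'.condKernel Q'.condKernel p.1 p.2).toReal
    with hF
  have hFmeas : Measurable F :=
    ((measurable_llr _ _).comp measurable_fst).add
      ((Kernel.measurable_rnDeriv _ _).ennreal_toReal.log)
  have hFint : Integrable F P' := hint'.congr hdec
  have hFint' : Integrable F (P'.fst ⊗ₘ P'.condKernel) := by rw [hdisP]; exact hFint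
  obtain ⟨hae_slice, hnorm⟩ :=
    (Measure.integrable_compProd_iff hFmeas.aestronglyMeasurable).mp (by rw [hdisP]; exact hFint)
  have hG0 : ∀ y, (0:ℝ) ≤ ∫ x, ‖F (y, x)‖ ∂P'.condKernel y :=
    fun y ↦ integral_nonneg fun _ ↦ norm_nonneg _
  -- key bound
  have hkey : ∀ᵐ y ∂P'.fst, llr P'.fst Q'.fst y ≤ ∫ x, F (y, x) ∂P'.condKernel y := by
    filter_upwards [hae_slice, hcondAC] with y hyint hyac
    have hb : (fun x ↦ Real.log (Kernel.rnDeriv P'.condKernel Q'.condKernel y x).toReal)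
        =ᵐ[P'.condKernel y] llr (P'.condKernel y) (Q'.condKernel y) := by
      filter_upwards [hyac.ae_le (Kernel.rnDeriv_eq_rnDeriv_measure (κ := P'.condKernel) (η := Q'.condKernel) (a := y))] with x hx
      rw [llr_def, hx]
    have hbint : Integrable
        (fun x ↦ Real.log (Kernel.rnDeriv P'.condKernel Q'.condKernel y x).toReal)
        (P'.condKernel y) := by
      have h' := hyint.sub (integrable_const (llr P'.fst Q'.fst y))
      refine h'.congr (ae_of_all _ fun x ↦ ?_)
      simp [hF]
    have hgibbs : 0 ≤ ∫ x, llr (P'.condKernel y) (Q'.condKernel y) x ∂P'.condKernel y :=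
      integral_llr_nonneg _ _ hyac (hbint.congr hb)
    have hsplit : ∫ x, F (y, x) ∂P'.condKernel y
        = llr P'.fst Q'.fst y
          + ∫ x, Real.log (Kernel.rnDeriv P'.condKernel Q'.condKernel y x).toReal
            ∂P'.condKernel y := by
      simp only [hF]
      rw [integral_add (integrable_const _) hbint, integral_const]
      simp
    have hcongr : ∫ x, Real.log (Kernel.rnDeriv P'.condKernel Q'.condKernel y x).toReal
          ∂P'.condKernel y
        = ∫ x, llr (P'.condKernel y) (Q'.condKernel y) x ∂P'.condKernel y :=
      integral_congr_ae hb
    rw [hsplit, hcongr]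
    linarith
  have hkey2 : ∀ᵐ y ∂P'.fst, llr P'.fst Q'.fst y ≤ ∫ x, ‖F (y, x)‖ ∂P'.condKernel y := by
    filter_upwards [hkey] with y h
    refine h.trans ?_
    calc ∫ x, F (y, x) ∂P'.condKernel y ≤ ‖∫ x, F (y, x) ∂P'.condKernel y‖ := le_abs_self _
      _ ≤ ∫ x, ‖F (y, x)‖ ∂P'.condKernel y := norm_integral_le_integral_norm _
  -- integrability of marginal llr
  have hneg : Integrable (fun y ↦ max (-llr P'.fst Q'.fst y) 0) P'.fst :=
    integrable_negpart_llr _ _ hmw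
  have hpos : Integrable (fun y ↦ max (llr P'.fst Q'.fst y) 0) P'.fst := by
    refine Integrable.mono' hnorm
      ((measurable_llr _ _).max measurable_const).aestronglyMeasurable ?_
    filter_upwards [hkey2] with y h
    rw [Real.norm_eq_abs, abs_of_nonneg (le_max_right _ _)]
    exact max_le h (hG0 y)
  have hllrint : Integrable (llr P'.fst Q'.fst) P'.fst := by
    have hid : llr P'.fst Q'.fst
        = fun y ↦ max (llr P'.fst Q'.fst y) 0 - max (-llr P'.fst Q'.fst y) 0 := by
      ext y
      rcases le_or_gt 0 (llr P'.fst Q'.fst y) with h | h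
      · rw [max_eq_left h, max_eq_right (by linarith)]; ring
      · rw [max_eq_right h.le, max_eq_left (by linarith)]; ring
    rw [hid]
    exact hpos.sub hneg
  -- H
  have hHmeas : StronglyMeasurable fun y ↦ ∫ x, F (y, x) ∂P'.condKernel y := by
    apply StronglyMeasurable.integral_kernel_prod_right (f := fun y x ↦ F (y, x))
    exact hFmeas.stronglyMeasurable
  have hHint : Integrable (fun y ↦ ∫ x, F (y, x) ∂P'.condKernel y) P'.fst := by
    refine Integrable.mono' hnorm hHmeas.aestronglyMeasurable (ae_of_all _ fun y ↦ ?_)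
    exact norm_integral_le_integral_norm _
  have hle1 : ∫ y, llr P'.fst Q'.fst y ∂P'.fst
      ≤ ∫ y, (∫ x, F (y, x) ∂P'.condKernel y) ∂P'.fst :=
    integral_mono_ae hllrint hHint hkey
  have hle2 : ∫ y, (∫ x, F (y, x) ∂P'.condKernel y) ∂P'.fst
      = ∫ p, F p ∂(P'.fst ⊗ₘ P'.condKernel) := (Measure.integral_compProd hFint').symm
  have hle3 : ∫ p, F p ∂P' = ∫ p, llr P' Q' p ∂P' := (integral_congr_ae hdec).symm
  refine ⟨?_, ?_, ?_⟩
  · rw [← hfstP, ← hfstQ]; exact hmw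
  · rw [← hfstP, ← hfstQ]; exact hllrint
  · rw [← hfstP, ← hfstQ]
    calc ∫ y, llr P'.fst Q'.fst y ∂P'.fst
        ≤ ∫ y, (∫ x, F (y, x) ∂P'.condKernel y) ∂P'.fst := hle1
      _ = ∫ p, F p ∂(P'.fst ⊗ₘ P'.condKernel) := hle2
      _ = ∫ p, F p ∂P' := by rw [hdisP]
      _ = ∫ p, llr P' Q' p ∂P' := hle3
      _ = ∫ p, llr P Q p ∂P := hval'

end Marginal

section Step

variable {α β : Type*} {mα : MeasurableSpace α} {mβ : MeasurableSpace β}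
  [StandardBorelSpace α] [Nonempty α] [MeasurableSpace.CountablyGenerated β]

lemma kl_step (μ ν : Measure α) [IsProbabilityMeasure μ] [IsProbabilityMeasure ν]
    (κ η : Kernel α β) [IsMarkovKernel κ] [IsMarkovKernel η]
    (hμν : μ ≪ ν) (hμint : Integrable (llr μ ν) μ)
    (hκη : ∀ x, κ x ≪ η x) (hκint : ∀ x, Integrable (llr (κ x) (η x)) (κ x))
    {a c : ℝ} (ha : ∫ x, llr μ ν x ∂μ ≤ a) (hc : ∀ x, ∫ y, llr (κ x) (η x) y ∂κ x ≤ c) :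
    μ.bind κ ≪ ν.bind η ∧ Integrable (llr (μ.bind κ) (ν.bind η)) (μ.bind κ) ∧
      ∫ y, llr (μ.bind κ) (ν.bind η) y ∂(μ.bind κ) ≤ a + c := by
  have hκη' : ∀ᵐ x ∂μ, κ x ≪ η x := ae_of_all _ hκη
  have hPQ : μ ⊗ₘ κ ≪ ν ⊗ₘ η := hμν.compProd hκη'
  have hdec := llr_compProd μ ν κ η hμν hκη'
  have hF2meas : Measurable fun p : α × β ↦ Real.log (Kernel.rnDeriv κ η p.1 p.2).toReal :=
    (Kernel.measurable_rnDeriv κ η).ennreal_toReal.log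
  have hslice_eq : ∀ x, (fun y ↦ Real.log (Kernel.rnDeriv κ η x y).toReal)
      =ᵐ[κ x] llr (κ x) (η x) := by
    intro x
    filter_upwards [(hκη x).ae_le
      (Kernel.rnDeriv_eq_rnDeriv_measure (κ := κ) (η := η) (a := x))] with y hy
    rw [llr_def, hy]
  have hslice_int : ∀ x, Integrable (fun y ↦ Real.log (Kernel.rnDeriv κ η x y).toReal) (κ x) :=
    fun x ↦ (hκint x).congr (hslice_eq x).symm
  have habs : ∀ x, ∫ y, ‖Real.log (Kernel.rnDeriv κ η x y).toReal‖ ∂κ x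
      ≤ c + 2 * Real.exp (-1) := by
    intro x
    have h1 : ∫ y, ‖Real.log (Kernel.rnDeriv κ η x y).toReal‖ ∂κ x
        = ∫ y, |llr (κ x) (η x) y| ∂κ x := by
      refine integral_congr_ae ?_
      filter_upwards [hslice_eq x] with y hy
      rw [Real.norm_eq_abs, hy]
    rw [h1]
    exact integral_abs_llr_le (κ x) (η x) (hκη x) (hκint x) (hc x)
  have hF1int : Integrable (fun p : α × β ↦ llr μ ν p.1) (μ ⊗ₘ κ) := by
    refine (Measure.integrable_compProd_iff (f := fun p : α × β ↦ llr μ ν p.1)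
      ((measurable_llr μ ν).comp measurable_fst).aestronglyMeasurable).mpr ⟨?_, ?_⟩
    · refine ae_of_all _ fun x ↦ ?_
      simpa using integrable_const (llr μ ν x)
    · have hrw : (fun x ↦ ∫ y, ‖llr μ ν x‖ ∂κ x) = fun x ↦ ‖llr μ ν x‖ := by
        ext x; rw [integral_const]; simp
      rw [hrw]; exact hμint.norm
  have hF2int : Integrable (fun p : α × β ↦ Real.log (Kernel.rnDeriv κ η p.1 p.2).toReal)
      (μ ⊗ₘ κ) := by
    refine (Measure.integrable_compProd_iff hF2meas.aestronglyMeasurable).mpr ⟨?_, ?_⟩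
    · exact ae_of_all _ hslice_int
    · have hmeas2 : StronglyMeasurable
          fun x ↦ ∫ y, ‖Real.log (Kernel.rnDeriv κ η x y).toReal‖ ∂κ x := by
        apply StronglyMeasurable.integral_kernel_prod_right
          (f := fun x y ↦ ‖Real.log (Kernel.rnDeriv κ η x y).toReal‖)
        exact hF2meas.norm.stronglyMeasurable
      refine Integrable.mono' (integrable_const (c + 2 * Real.exp (-1)))
        hmeas2.aestronglyMeasurable (ae_of_all _ fun x ↦ ?_)
      rw [Real.norm_eq_abs, abs_of_nonneg (integral_nonneg fun _ ↦ norm_nonneg _)]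
      exact habs x
  have hFint : Integrable
      (fun p : α × β ↦ llr μ ν p.1 + Real.log (Kernel.rnDeriv κ η p.1 p.2).toReal)
      (μ ⊗ₘ κ) := hF1int.add hF2int
  have hPint : Integrable (llr (μ ⊗ₘ κ) (ν ⊗ₘ η)) (μ ⊗ₘ κ) := hFint.congr hdec.symm
  have hval : ∫ p, llr (μ ⊗ₘ κ) (ν ⊗ₘ η) p ∂(μ ⊗ₘ κ) ≤ a + c := by
    rw [integral_congr_ae hdec, integral_add hF1int hF2int]
    have h1 : ∫ p : α × β, llr μ ν p.1 ∂(μ ⊗ₘ κ) = ∫ x, llr μ ν x ∂μ := by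
      rw [Measure.integral_compProd hF1int]
      simp
    have h2 : ∫ p : α × β, Real.log (Kernel.rnDeriv κ η p.1 p.2).toReal ∂(μ ⊗ₘ κ) ≤ c := by
      rw [Measure.integral_compProd hF2int]
      have hxval : ∀ x, ∫ y, Real.log (Kernel.rnDeriv κ η x y).toReal ∂κ x ≤ c := by
        intro x
        rw [integral_congr_ae (hslice_eq x)]
        exact hc x
      have houter_meas : StronglyMeasurable
          fun x ↦ ∫ y, Real.log (Kernel.rnDeriv κ η x y).toReal ∂κ x := by
        apply StronglyMeasurable.integral_kernel_prod_right
          (f := fun x y ↦ Real.log (Kernel.rnDeriv κ η x y).toReal)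
        exact hF2meas.stronglyMeasurable
      have houter_int : Integrable
          (fun x ↦ ∫ y, Real.log (Kernel.rnDeriv κ η x y).toReal ∂κ x) μ := by
        refine Integrable.mono' (integrable_const (c + 2 * Real.exp (-1)))
          houter_meas.aestronglyMeasurable (ae_of_all _ fun x ↦ ?_)
        exact (norm_integral_le_integral_norm _).trans (habs x)
      calc ∫ x, (∫ y, Real.log (Kernel.rnDeriv κ η x y).toReal ∂κ x) ∂μ
          ≤ ∫ _, c ∂μ := integral_mono_ae houter_int (integrable_const c) (ae_of_all _ hxval)
        _ = c := by simp
    linarith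
  have hsnd := kl_snd_le (μ ⊗ₘ κ) (ν ⊗ₘ η) hPQ hPint
  rw [snd_compProd_eq_bind μ κ, snd_compProd_eq_bind ν η] at hsnd
  exact ⟨hsnd.1, hsnd.2.1, hsnd.2.2.trans hval⟩

end Step


end Auxiliary

/-- If two Markov chains on standard Borel spaces start from the same initial
distribution `μ₀` and evolve with Markov kernels `κ_i` resp. `η_i`, and each stepwise
conditional KL divergence is bounded by `c ≥ 0`, then the KL divergence between the
marginal laws of the final states after `n` steps is at most `n·c`
(this yields Lemma 1: `KL(CoDe(N,B)‖Base) ≤ (log N − (N−1)/N)·(T/B)` with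
`c = log N − (N−1)/N` and `n = T/B` blocks). -/
theorem kl_final_marginal_le_of_stepwise_bound
    (n : ℕ) (hn : 1 ≤ n)
    (X : ℕ → Type*) [∀ i, MeasurableSpace (X i)] [∀ i, StandardBorelSpace (X i)]
    (κ η : ∀ i : ℕ, Kernel (X i) (X (i + 1)))
    [∀ i, IsMarkovKernel (κ i)] [∀ i, IsMarkovKernel (η i)]
    (μ₀ : Measure (X 0)) [IsProbabilityMeasure μ₀]
    (μ ν : ∀ i, Measure (X i))
    (hμ0 : μ 0 = μ₀) (hν0 : ν 0 = μ₀)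
    (hμ : ∀ i, μ (i + 1) = (μ i).bind (κ i))
    (hν : ∀ i, ν (i + 1) = (ν i).bind (η i))
    (c : ℝ) (hc : 0 ≤ c)
    (hstep : ∀ i, ∀ x : X i, KLe (κ i x) (η i x) ≤ (c : EReal)) :
    KLe (μ n) (ν n) ≤ ((n : ℝ) * c : EReal) := by
  have hne : ∀ i, Nonempty (X i) := by
    intro i
    induction i with
    | zero =>
      by_contra h
      have huniv : (Set.univ : Set (X 0)) = ∅ := Set.univ_eq_empty_iff.mpr (not_nonempty_iff.mp h)
      have h1 : μ₀ Set.univ = 1 := measure_univ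
      rw [huniv, measure_empty] at h1
      exact zero_ne_one h1
    | succ i ih =>
      obtain ⟨x⟩ := ih
      by_contra h
      have huniv : (Set.univ : Set (X (i + 1))) = ∅ :=
        Set.univ_eq_empty_iff.mpr (not_nonempty_iff.mp h)
      have h1 : (κ i x) Set.univ = 1 := measure_univ
      rw [huniv, measure_empty] at h1
      exact zero_ne_one h1
  have hprob : ∀ i, IsProbabilityMeasure (μ i) ∧ IsProbabilityMeasure (ν i) := by
    intro i
    induction i with
    | zero =>
      rw [hμ0, hν0]
      exact ⟨inferInstance, inferInstance⟩
    | succ i ih =>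
      obtain ⟨h1, h2⟩ := ih
      rw [hμ i, hν i]
      constructor
      · haveI := h1
        rw [← snd_compProd_eq_bind (μ i) (κ i)]
        infer_instance
      · haveI := h2
        rw [← snd_compProd_eq_bind (ν i) (η i)]
        infer_instance
  have hstep' : ∀ i, ∀ x : X i, (κ i x ≪ η i x) ∧ Integrable (llr (κ i x) (η i x)) (κ i x) ∧
      ∫ y, llr (κ i x) (η i x) y ∂(κ i x) ≤ c := by
    intro i x
    have h := hstep i x
    rw [KLe] at h
    split_ifs at h with hcond
    · refine ⟨hcond.1, hcond.2, ?_⟩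
      exact_mod_cast h
    · exact absurd h (not_le.mpr (EReal.coe_lt_top c))
  have hmain : ∀ i, (μ i ≪ ν i) ∧ Integrable (llr (μ i) (ν i)) (μ i) ∧
      ∫ x, llr (μ i) (ν i) x ∂(μ i) ≤ (i : ℝ) * c := by
    intro i
    induction i with
    | zero =>
      rw [hμ0, hν0]
      have hzero : llr μ₀ μ₀ =ᵐ[μ₀] 0 := by
        filter_upwards [μ₀.rnDeriv_self] with x hx
        simp [llr_def, hx]
      refine ⟨Measure.AbsolutelyContinuous.rfl, (integrable_zero _ _ _).congr hzero.symm, ?_⟩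
      rw [integral_congr_ae hzero]
      simp
    | succ i ih =>
      obtain ⟨h1, h2, h3⟩ := ih
      haveI := (hprob i).1
      haveI := (hprob i).2
      haveI := hne i
      rw [hμ i, hν i]
      have hs := kl_step (μ i) (ν i) (κ i) (η i) h1 h2 (fun x ↦ (hstep' i x).1)
        (fun x ↦ (hstep' i x).2.1) h3 (fun x ↦ (hstep' i x).2.2)
      refine ⟨hs.1, hs.2.1, hs.2.2.trans ?_⟩
      push_cast
      ring_nf
      exact le_refl _
  obtain ⟨h1, h2, h3⟩ := hmain n
  rw [KLe, if_pos ⟨h1, h2⟩]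
  exact_mod_cast h3
end

section
/- Let μ be a probability measure on ℝ (the prior on θ) with ∫ |θ| dμ(θ) < ∞, let σ > 0, and let X = θ + σZ where Z is a standard Gaussian random variable independent of θ; equivalently, the joint law of (θ, X) is μ(dθ)·φ_σ(x−θ)dx with φ_σ the density of N(0,σ²). Let m(x) = ∫ φ_σ(x−θ) dμ(θ) be the marginal density of X. Then m is everywhere positive and differentiable, and the posterior mean satisfies Tweedie's formula: for every bounded measurable g : ℝ → ℝ, E[θ·g(X)] = E[(X + σ²·(m'(X)/m(X)))·g(X)]; equivalently, E[θ | X = x] = x + σ²·(d/dx) log m(x) for Lebesgue-almost every x. -/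
open MeasureTheory
open scoped ENNReal NNReal

/-- Density of the centered Gaussian with variance `σ²`:
`φ_σ(u) = (1/(σ√(2π)))·exp(−u²/(2σ²))`. -/
noncomputable def gaussDensity (σ : ℝ) (u : ℝ) : ℝ :=
  (1 / (σ * Real.sqrt (2 * Real.pi))) * Real.exp (-u ^ 2 / (2 * σ ^ 2))

/-- Marginal density of `X = θ + σZ`: `m(x) = ∫ φ_σ(x−θ) dμ(θ)`. -/
noncomputable def marginalDensity (μ : Measure ℝ) (σ : ℝ) (x : ℝ) : ℝ :=
  ∫ θ, gaussDensity σ (x - θ) ∂μ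

/-- Joint law of `(θ, X)`: the measure `μ(dθ)·φ_σ(x−θ)dx` on `ℝ × ℝ`. -/
noncomputable def jointLaw (μ : Measure ℝ) (σ : ℝ) : Measure (ℝ × ℝ) :=
  (μ.prod volume).withDensity fun q => ENNReal.ofReal (gaussDensity σ (q.2 - q.1))

lemma gauss_pos {σ : ℝ} (hσ : 0 < σ) (u : ℝ) : 0 < gaussDensity σ u := by
  unfold gaussDensity
  have h2π : 0 < Real.sqrt (2 * Real.pi) := Real.sqrt_pos.2 (by positivity)
  positivity

lemma gauss_le {σ : ℝ} (hσ : 0 < σ) (u : ℝ) :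
    gaussDensity σ u ≤ 1 / (σ * Real.sqrt (2 * Real.pi)) := by
  unfold gaussDensity
  have h2π : 0 < Real.sqrt (2 * Real.pi) := Real.sqrt_pos.2 (by positivity)
  have h1 : Real.exp (-u ^ 2 / (2 * σ ^ 2)) ≤ 1 := by
    rw [Real.exp_le_one_iff]
    have : (0:ℝ) ≤ u ^ 2 / (2 * σ ^ 2) := by positivity
    rw [neg_div]
    linarith
  exact mul_le_of_le_one_right (by positivity) h1

lemma gauss_mul_le {σ : ℝ} (hσ : 0 < σ) (u : ℝ) :
    |u| * gaussDensity σ u ≤ 1 / Real.sqrt (2 * Real.pi) := by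
  have h2π : 0 < Real.sqrt (2 * Real.pi) := Real.sqrt_pos.2 (by positivity)
  have h1 : u ^ 2 / (2 * σ ^ 2) + 1 ≤ Real.exp (u ^ 2 / (2 * σ ^ 2)) :=
    Real.add_one_le_exp _
  have h2 : |u| ≤ σ * Real.exp (u ^ 2 / (2 * σ ^ 2)) := by
    have h1' : σ * (u ^ 2 / (2 * σ ^ 2) + 1) ≤ σ * Real.exp (u ^ 2 / (2 * σ ^ 2)) :=
      mul_le_mul_of_nonneg_left h1 hσ.le
    have he : σ * (u ^ 2 / (2 * σ ^ 2) + 1) = (u ^ 2 + 2 * σ ^ 2) / (2 * σ) := by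
      field_simp
    have h5 : |u| ≤ (u ^ 2 + 2 * σ ^ 2) / (2 * σ) := by
      rw [le_div_iff₀ (by positivity)]
      nlinarith [sq_nonneg (|u| - σ), sq_abs u]
    rw [he] at h1'
    linarith
  have h3 : |u| * Real.exp (-(u ^ 2 / (2 * σ ^ 2))) ≤ σ := by
    rw [Real.exp_neg, mul_inv_le_iff₀ (Real.exp_pos _)]
    linarith [h2]
  unfold gaussDensity
  calc |u| * (1 / (σ * Real.sqrt (2 * Real.pi)) * Real.exp (-u ^ 2 / (2 * σ ^ 2)))
      = (|u| * Real.exp (-(u ^ 2 / (2 * σ ^ 2)))) * (1 / (σ * Real.sqrt (2 * Real.pi))) := by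
        rw [neg_div]; ring
    _ ≤ σ * (1 / (σ * Real.sqrt (2 * Real.pi))) :=
        mul_le_mul_of_nonneg_right h3 (by positivity)
    _ = 1 / Real.sqrt (2 * Real.pi) := by field_simp

lemma gauss_continuous (σ : ℝ) : Continuous (gaussDensity σ) := by
  unfold gaussDensity
  fun_prop

lemma gauss_hasDerivAt {σ : ℝ} (hσ : 0 < σ) (θ x : ℝ) :
    HasDerivAt (fun x => gaussDensity σ (x - θ))
      (-((x - θ) / σ ^ 2) * gaussDensity σ (x - θ)) x := by
  have h0 : HasDerivAt (fun x : ℝ => (x - θ) ^ 2) (2 * (x - θ)) x := by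
    simpa using ((hasDerivAt_id x).sub_const θ).fun_pow 2
  have h1 : HasDerivAt (fun x : ℝ => -(x - θ) ^ 2 / (2 * σ ^ 2))
      (-((x - θ) / σ ^ 2)) x := by
    have := (h0.neg).div_const (2 * σ ^ 2)
    refine this.congr_deriv ?_
    field_simp
  have h2 := h1.exp
  have h3 := h2.const_mul (1 / (σ * Real.sqrt (2 * Real.pi)))
  refine h3.congr_deriv ?_
  unfold gaussDensity
  ring

lemma gauss_integrable_vol {σ : ℝ} (hσ : 0 < σ) :
    Integrable (gaussDensity σ) volume := by
  have h : gaussDensity σ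
      = fun u => (1 / (σ * Real.sqrt (2 * Real.pi))) * Real.exp (-(1 / (2 * σ ^ 2)) * u ^ 2) := by
    funext u
    unfold gaussDensity
    congr 1
    ring
  rw [h]
  exact (integrable_exp_neg_mul_sq (by positivity)).const_mul _

/-- Tweedie's formula: for a prior `μ` with finite first moment and the Gaussian
observation model `X = θ + σZ`, the marginal density `m` is everywhere positive and
differentiable, and the posterior mean satisfies
`E[θ·g(X)] = E[(X + σ²·m'(X)/m(X))·g(X)]` for every bounded measurable `g`,
i.e. `E[θ | X = x] = x + σ²·(log m)'(x)`. -/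
theorem tweedie_formula (μ : Measure ℝ) [IsProbabilityMeasure μ]
    (hmom : Integrable (fun θ => |θ|) μ) (σ : ℝ) (hσ : 0 < σ) :
    (∀ x, 0 < marginalDensity μ σ x) ∧
    Differentiable ℝ (marginalDensity μ σ) ∧
    (∀ g : ℝ → ℝ, Measurable g → (∃ C, ∀ x, |g x| ≤ C) →
      ∫ q, q.1 * g q.2 ∂(jointLaw μ σ) =
        ∫ q, (q.2 + σ ^ 2 * (deriv (marginalDensity μ σ) q.2 / marginalDensity μ σ q.2))
            * g q.2 ∂(jointLaw μ σ)) := by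
  have hσ2 : (σ : ℝ) ^ 2 ≠ 0 := by positivity
  have hgm : Measurable (gaussDensity σ) := (gauss_continuous σ).measurable
  -- integrability of θ ↦ φ(x-θ) over μ
  have hint : ∀ x : ℝ, Integrable (fun θ => gaussDensity σ (x - θ)) μ := by
    intro x
    refine Integrable.mono' (integrable_const (1 / (σ * Real.sqrt (2 * Real.pi))))
      ((hgm.comp (measurable_const.sub measurable_id)).aestronglyMeasurable) ?_
    exact Filter.Eventually.of_forall fun θ => by
      rw [Real.norm_eq_abs, abs_of_pos (gauss_pos hσ _)]; exact gauss_le hσ _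
  -- positivity of the marginal density
  have hm_pos : ∀ x, 0 < marginalDensity μ σ x := by
    intro x
    rw [marginalDensity,
      integral_pos_iff_support_of_nonneg (fun θ => (gauss_pos hσ (x - θ)).le) (hint x)]
    have hs : (Function.support fun θ => gaussDensity σ (x - θ)) = Set.univ := by
      ext θ; simp [Function.support, (gauss_pos hσ (x - θ)).ne']
    simp [hs]
  -- derivative of the marginal density
  have hderiv : ∀ x : ℝ, HasDerivAt (marginalDensity μ σ)
      (∫ θ, -((x - θ) / σ ^ 2) * gaussDensity σ (x - θ) ∂μ) x := by
    intro x₀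
    have key := hasDerivAt_integral_of_dominated_loc_of_deriv_le
      (F := fun x θ => gaussDensity σ (x - θ))
      (F' := fun x θ => -((x - θ) / σ ^ 2) * gaussDensity σ (x - θ))
      (x₀ := x₀) (s := Set.univ) (bound := fun _ => 1 / Real.sqrt (2 * Real.pi) * (σ ^ 2)⁻¹)
      (μ := μ) Filter.univ_mem
      (Filter.Eventually.of_forall fun x =>
        ((hgm.comp (measurable_const.sub measurable_id)).aestronglyMeasurable))
      (hint x₀)
      (((measurable_const.sub measurable_id).div_const _).neg.mul
        (hgm.comp (measurable_const.sub measurable_id))).aestronglyMeasurable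
      (Filter.Eventually.of_forall fun θ => fun x _ => ?_)
      (integrable_const _)
      (Filter.Eventually.of_forall fun θ => fun x _ => gauss_hasDerivAt hσ θ x)
    · exact key.2
    · have h := gauss_mul_le hσ (x - θ)
      calc ‖-((x - θ) / σ ^ 2) * gaussDensity σ (x - θ)‖
          = |x - θ| * gaussDensity σ (x - θ) * (σ ^ 2)⁻¹ := by
            rw [Real.norm_eq_abs, abs_mul, abs_neg, abs_div,
              abs_of_pos (gauss_pos hσ _), abs_of_pos (by positivity : (0:ℝ) < σ ^ 2)]
            ring
        _ ≤ 1 / Real.sqrt (2 * Real.pi) * (σ ^ 2)⁻¹ :=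
            mul_le_mul_of_nonneg_right h (by positivity)
  have hm_diff : Differentiable ℝ (marginalDensity μ σ) :=
    fun x => (hderiv x).differentiableAt
  refine ⟨hm_pos, hm_diff, ?_⟩
  intro g hg ⟨C, hC⟩
  have hC0 : 0 ≤ C := le_trans (abs_nonneg _) (hC 0)
  have hm_meas : Measurable (marginalDensity μ σ) := hm_diff.continuous.measurable
  have hd_meas : Measurable (deriv (marginalDensity μ σ)) := measurable_deriv _
  set m := marginalDensity μ σ with hm_def
  set r : ℝ → ℝ := fun x => x + σ ^ 2 * (deriv m x / m x) with hr_def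
  have hr_meas : Measurable r :=
    measurable_id.add (measurable_const.mul (hd_meas.div hm_meas))
  -- the pointwise identity x*m(x) + σ²*m'(x) = ∫ θ φ(x-θ) dμ
  have hkey : ∀ x : ℝ, r x * m x = ∫ θ, θ * gaussDensity σ (x - θ) ∂μ := by
    intro x
    have hd : deriv m x = ∫ θ, -((x - θ) / σ ^ 2) * gaussDensity σ (x - θ) ∂μ :=
      (hderiv x).deriv
    have hint1 : Integrable (fun θ => x * gaussDensity σ (x - θ)) μ :=
      (hint x).const_mul x
    have hint2 : Integrable (fun θ => σ ^ 2 * (-((x - θ) / σ ^ 2) * gaussDensity σ (x - θ))) μ := by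
      refine Integrable.mono' (integrable_const (1 / Real.sqrt (2 * Real.pi)))
        ((measurable_const.mul (((measurable_const.sub measurable_id).div_const _).neg.mul
          (hgm.comp (measurable_const.sub measurable_id)))).aestronglyMeasurable) ?_
      refine Filter.Eventually.of_forall fun θ => ?_
      have := gauss_mul_le hσ (x - θ)
      calc ‖σ ^ 2 * (-((x - θ) / σ ^ 2) * gaussDensity σ (x - θ))‖
          = |x - θ| * gaussDensity σ (x - θ) := by
            rw [Real.norm_eq_abs, abs_mul, abs_mul, abs_neg, abs_div,
              abs_of_pos (gauss_pos hσ _), abs_of_pos (by positivity : (0:ℝ) < σ ^ 2)]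
            field_simp
        _ ≤ 1 / Real.sqrt (2 * Real.pi) := this
    have eq1 : r x * m x = x * m x + σ ^ 2 * deriv m x := by
      rw [hr_def]
      field_simp [(hm_pos x).ne']
    rw [eq1, hd, hm_def, marginalDensity, ← integral_const_mul x, ← integral_const_mul (σ ^ 2),
      ← integral_add hint1 hint2]
    refine integral_congr_ae (Filter.Eventually.of_forall fun θ => ?_)
    field_simp
    ring
  -- reduce the jointLaw integral to the product measure
  have hwd : ∀ f : ℝ × ℝ → ℝ, (∫ q, f q ∂(jointLaw μ σ))
      = ∫ q : ℝ × ℝ, gaussDensity σ (q.2 - q.1) * f q ∂(μ.prod volume) := by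
    intro f
    rw [jointLaw]
    have he : (fun q : ℝ × ℝ => ENNReal.ofReal (gaussDensity σ (q.2 - q.1)))
        = fun q : ℝ × ℝ => ((gaussDensity σ (q.2 - q.1)).toNNReal : ℝ≥0∞) := rfl
    have hφq : Measurable fun q : ℝ × ℝ => gaussDensity σ (q.2 - q.1) :=
      hgm.comp (measurable_snd.sub measurable_fst)
    rw [he, integral_withDensity_eq_integral_smul
      (f := fun q : ℝ × ℝ => (gaussDensity σ (q.2 - q.1)).toNNReal)
      (by exact hφq.real_toNNReal) f]
    refine integral_congr_ae (Filter.Eventually.of_forall fun q => ?_)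
    show (gaussDensity σ (q.2 - q.1)).toNNReal • f q = gaussDensity σ (q.2 - q.1) * f q
    rw [NNReal.smul_def, Real.coe_toNNReal _ (gauss_pos hσ _).le]
    rfl
  -- integrability of D(θ,x) = |θ| φ(x-θ) on the product
  have hDmeas : Measurable fun q : ℝ × ℝ => |q.1| * gaussDensity σ (q.2 - q.1) :=
    measurable_fst.abs.mul (hgm.comp (measurable_snd.sub measurable_fst))
  have hD_int : Integrable (fun q : ℝ × ℝ => |q.1| * gaussDensity σ (q.2 - q.1))
      (μ.prod volume) := by
    refine (integrable_prod_iff hDmeas.aestronglyMeasurable).2 ⟨?_, ?_⟩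
    · exact Filter.Eventually.of_forall fun θ =>
        (((gauss_integrable_vol hσ).comp_sub_right θ).const_mul |θ|)
    · have hnorm : ∀ θ : ℝ, (∫ x, ‖|θ| * gaussDensity σ (x - θ)‖ ∂volume)
          = |θ| * (∫ u, gaussDensity σ u ∂volume) := by
        intro θ
        rw [← integral_sub_right_eq_self (fun u => gaussDensity σ u) θ, ← integral_const_mul]
        refine integral_congr_ae (Filter.Eventually.of_forall fun x => ?_)
        beta_reduce
        rw [Real.norm_eq_abs, abs_mul, abs_abs, abs_of_pos (gauss_pos hσ _)]
      simp_rw [hnorm]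
      exact hmom.mul_const _
  -- integrability of the left integrand
  have hA_meas : Measurable fun q : ℝ × ℝ =>
      gaussDensity σ (q.2 - q.1) * (q.1 * g q.2) :=
    (hgm.comp (measurable_snd.sub measurable_fst)).mul
      (measurable_fst.mul (hg.comp measurable_snd))
  have hA_int : Integrable (fun q : ℝ × ℝ => gaussDensity σ (q.2 - q.1) * (q.1 * g q.2))
      (μ.prod volume) := by
    refine Integrable.mono' (hD_int.const_mul C) hA_meas.aestronglyMeasurable
      (Filter.Eventually.of_forall fun q => ?_)
    rw [Real.norm_eq_abs, abs_mul, abs_mul, abs_of_pos (gauss_pos hσ _)]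
    calc gaussDensity σ (q.2 - q.1) * (|q.1| * |g q.2|)
        = (|q.1| * gaussDensity σ (q.2 - q.1)) * |g q.2| := by ring
      _ ≤ (|q.1| * gaussDensity σ (q.2 - q.1)) * C :=
          mul_le_mul_of_nonneg_left (hC q.2) (mul_nonneg (abs_nonneg _) (gauss_pos hσ _).le)
      _ = C * (|q.1| * gaussDensity σ (q.2 - q.1)) := by ring
  -- integrability of the right integrand
  have hB_meas : Measurable fun q : ℝ × ℝ =>
      gaussDensity σ (q.2 - q.1) * (r q.2 * g q.2) :=
    (hgm.comp (measurable_snd.sub measurable_fst)).mul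
      ((hr_meas.comp measurable_snd).mul (hg.comp measurable_snd))
  have hBnorm : ∀ x : ℝ, (∫ θ, ‖gaussDensity σ (x - θ) * (r x * g x)‖ ∂μ)
      = |r x * g x| * m x := by
    intro x
    rw [hm_def, marginalDensity, ← integral_const_mul]
    refine integral_congr_ae (Filter.Eventually.of_forall fun θ => ?_)
    beta_reduce
    rw [Real.norm_eq_abs, abs_mul, abs_of_pos (gauss_pos hσ _)]
    ring
  have hB_int : Integrable (fun q : ℝ × ℝ => gaussDensity σ (q.2 - q.1) * (r q.2 * g q.2))
      (μ.prod volume) := by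
    refine (integrable_prod_iff' hB_meas.aestronglyMeasurable).2 ⟨?_, ?_⟩
    · exact Filter.Eventually.of_forall fun x => (hint x).mul_const (r x * g x)
    · refine Integrable.mono'
        ((hD_int.integral_prod_right).const_mul C)
        (hB_meas.norm.stronglyMeasurable.integral_prod_left').aestronglyMeasurable
        (Filter.Eventually.of_forall fun x => ?_)
      have h1 : (0:ℝ) ≤ ∫ θ, ‖gaussDensity σ (x - θ) * (r x * g x)‖ ∂μ :=
        integral_nonneg fun θ => norm_nonneg _
      rw [Real.norm_eq_abs, abs_of_nonneg h1, hBnorm x]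
      have h2 : |r x * m x| ≤ ∫ θ, |θ| * gaussDensity σ (x - θ) ∂μ := by
        rw [hkey x]
        calc |∫ θ, θ * gaussDensity σ (x - θ) ∂μ|
              ≤ ∫ θ, |θ| * |gaussDensity σ (x - θ)| ∂μ := by
              simpa [Real.norm_eq_abs, abs_mul] using
                norm_integral_le_integral_norm (μ := μ) (fun θ => θ * gaussDensity σ (x - θ))
          _ = ∫ θ, |θ| * gaussDensity σ (x - θ) ∂μ := by
              refine integral_congr_ae (Filter.Eventually.of_forall fun θ => ?_)
              beta_reduce
              rw [abs_of_pos (gauss_pos hσ _)]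
      calc |r x * g x| * m x = |g x| * |r x * m x| := by
            rw [abs_mul, abs_mul, abs_of_pos (hm_pos x)]; ring
        _ ≤ C * |r x * m x| :=
            mul_le_mul_of_nonneg_right (hC x) (abs_nonneg _)
        _ ≤ C * ∫ θ, |θ| * gaussDensity σ (x - θ) ∂μ :=
            mul_le_mul_of_nonneg_left h2 hC0
  -- the final computation via Fubini
  rw [hwd fun q => q.1 * g q.2, hwd fun q => r q.2 * g q.2,
    integral_prod_symm _ hA_int, integral_prod_symm _ hB_int]
  refine integral_congr_ae (Filter.Eventually.of_forall fun x => ?_)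
  show (∫ θ, gaussDensity σ (x - θ) * (θ * g x) ∂μ)
      = ∫ θ, gaussDensity σ (x - θ) * (r x * g x) ∂μ
  have l1 : (∫ θ, gaussDensity σ (x - θ) * (θ * g x) ∂μ)
      = (∫ θ, θ * gaussDensity σ (x - θ) ∂μ) * g x := by
    rw [← integral_mul_const]
    exact integral_congr_ae (Filter.Eventually.of_forall fun θ => by ring)
  have l2 : (∫ θ, gaussDensity σ (x - θ) * (r x * g x) ∂μ)
      = m x * (r x * g x) := by
    rw [hm_def, marginalDensity, ← integral_mul_const]
  rw [l1, l2, ← hkey x]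
  ring
end
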